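/- There is no deterministic finite state transducer T (even partial, reading input left-to-right with outputs on transitions) computing the function f on {a, b, c, d}* defined by f(abc) = ab and f(abd) = bd with aggregate cost at most 1 on both inputs; however, there is a transducer with regular lookahead computing f on these two inputs with aggregate cost 1 on each. In particular: any deterministic transducer T with T(abc) = ab and T(abd) = bd has aggregate cost at least 2 on at least one of the two inputs. -/

import Mathlib

/-- Levenshtein distance with unit costs (Mathlib's `levenshtein Levenshtein.defaultCost`,
removed from Mathlib; spelled out with the same recursion). -/
def unitLevenshtein {A : Type*} [DecidableEq A] : List A → List A → ℕ
  | [], ys => ys.length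
  | xs, [] => xs.length
  | x :: xs, y :: ys =>
      min (1 + unitLevenshtein xs (y :: ys))
        (min (1 + unitLevenshtein (x :: xs) ys)
          ((if x = y then 0 else 1) + unitLevenshtein xs ys))
termination_by xs ys => xs.length + ys.length

/-- Edit distance between two strings (lists), with unit insertion/deletion/substitution cost. -/
def ed {A : Type*} [DecidableEq A] (s t : List A) : ℕ :=
  unitLevenshtein s t

/-- A total finite state transducer. -/
structure FT (Q A : Type*) where
  step : Q → A → Q
  out : Q → A → List A
  start : Q

namespace FT

variable {Q A : Type*} (T : FT Q A)

/-- Extended state-transition function. -/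
def stepList : Q → List A → Q
  | q, [] => q
  | q, a :: u => stepList (T.step q a) u

/-- Extended output function. -/
def outList : Q → List A → List A
  | _, [] => []
  | q, a :: u => T.out q a ++ outList (T.step q a) u

/-- The output of the transducer on a word. -/
def output (w : List A) : List A := T.outList T.start w

/-- Aggregate cost of `T` on a word, starting from state `q`. -/
def aggCost [DecidableEq A] : Q → List A → ℕ
  | _, [] => 0
  | q, a :: u => ed [a] (T.out q a) + aggCost (T.step q a) u

end FT

/-- A transducer with regular lookahead: reads pairs of lookahead states and characters,
outputs strings of characters. -/
structure LFT (Q S A : Type*) where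
  step : Q → S × A → Q
  out : Q → S × A → List A
  start : Q

def LFT.outList {Q S A : Type*} (T : LFT Q S A) : Q → List (S × A) → List A
  | _, [] => []
  | q, p :: u => T.out q p ++ LFT.outList T (T.step q p) u

/-- The lookahead-annotated word: each character is paired with the state reached by `R`
on the reversed suffix following it. -/
def lookWord {A S : Type*} (R : DFA A S) (w : List A) : List (S × A) :=
  List.ofFn (fun i : Fin w.length => (R.evalFrom R.start ((w.drop (i + 1)).reverse), w[i]))

/-- Output of the transducer with lookahead `(T', R)` on `w`. -/
def lookOutput {Q S A : Type*} (R : DFA A S) (T' : LFT Q S A) (w : List A) : List A :=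
  T'.outList T'.start (lookWord R w)

def LFT.aggCost {Q S A : Type*} [DecidableEq A] (T : LFT Q S A) : Q → List (S × A) → ℕ
  | _, [] => 0
  | q, p :: u => ed [p.2] (T.out q p) + LFT.aggCost T (T.step q p) u

/-- Aggregate cost of a transducer with lookahead on `w`. -/
def lookAggCost {Q S A : Type*} [DecidableEq A]
    (R : DFA A S) (T' : LFT Q S A) (w : List A) : ℕ :=
  T'.aggCost T'.start (lookWord R w)

/-!
Reading the common prefix `ab`, a deterministic transducer is in the same states and emits the
same string on `abc` and on `abd`. Since the two required outputs already differ in their first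
letter, that string must be empty, so deleting both `a` and `b` costs 2. With one letter of
lookahead the transducer knows whether `d` follows, and can delete only the letter that is not
part of the output.
-/

theorem ed_singleton_nil {A : Type*} [DecidableEq A] (a : A) : ed [a] [] = 1 := by
  simp [ed, unitLevenshtein]

namespace FT

variable {Q A : Type*} (T : FT Q A)

theorem outList_append (q : Q) (u v : List A) :
    T.outList q (u ++ v) = T.outList q u ++ T.outList (T.stepList q u) v := by
  induction u generalizing q with
  | nil => rfl
  | cons a u ih => simp [outList, stepList, ih]

theorem aggCost_append [DecidableEq A] (q : Q) (u v : List A) :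
    T.aggCost q (u ++ v) = T.aggCost q u + T.aggCost (T.stepList q u) v := by
  induction u generalizing q with
  | nil => simp [aggCost, stepList]
  | cons a u ih => simp [aggCost, stepList, ih, Nat.add_assoc]

theorem aggCost_eq_length_of_outList_eq_nil [DecidableEq A] {q : Q} {u : List A}
    (h : T.outList q u = []) : T.aggCost q u = u.length := by
  induction u generalizing q with
  | nil => rfl
  | cons a u ih =>
    rw [outList, List.append_eq_nil_iff] at h
    simp [aggCost, h.1, ed_singleton_nil, ih h.2, Nat.add_comm]

theorem outList_eq_nil_of_head?_ne {q : Q} {p u v : List A}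
    (h : (T.outList q (p ++ u)).head? ≠ (T.outList q (p ++ v)).head?) :
    T.outList q p = [] := by
  rw [outList_append, outList_append] at h
  cases hp : T.outList q p with
  | nil => rfl
  | cons x w => simp [hp] at h

theorem length_le_aggCost_of_head?_ne [DecidableEq A] {p u v : List A}
    (h : (T.output (p ++ u)).head? ≠ (T.output (p ++ v)).head?) :
    p.length ≤ T.aggCost T.start (p ++ u) := by
  rw [aggCost_append, ← T.aggCost_eq_length_of_outList_eq_nil (T.outList_eq_nil_of_head?_ne h)]
  exact Nat.le_add_right _ _

end FT

/-- Run on the reversed suffix, its state says whether a `d = 3` occurs after the current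
position. -/
def suffixContainsThree : DFA (Fin 4) Bool where
  step s a := s || a == 3
  start := false
  accept := ∅

def deleteUnmatched : LFT Unit Bool (Fin 4) where
  step _ _ := ()
  out _ p := if p.2 = 0 then (if p.1 then [] else [0]) else if p.2 = 2 then [] else [p.2]
  start := ()

/-- With characters a = 0, b = 1, c = 2, d = 3: no deterministic transducer mapping
`abc ↦ ab` and `abd ↦ bd` has aggregate cost at most 1 on both inputs, but a transducer
with regular lookahead achieves aggregate cost 1 on each. -/
theorem lookahead_beats_deterministic :
    (∀ (Q : Type) (T : FT Q (Fin 4)),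
      T.output [0, 1, 2] = [0, 1] → T.output [0, 1, 3] = [1, 3] →
      2 ≤ T.aggCost T.start [0, 1, 2] ∨ 2 ≤ T.aggCost T.start [0, 1, 3]) ∧
    (∃ (S Q : Type) (R : DFA (Fin 4) S) (T' : LFT Q S (Fin 4)),
      lookOutput R T' [0, 1, 2] = [0, 1] ∧ lookOutput R T' [0, 1, 3] = [1, 3] ∧
      lookAggCost R T' [0, 1, 2] = 1 ∧ lookAggCost R T' [0, 1, 3] = 1) := by
  refine ⟨fun Q T hc hd => Or.inl ?_, ⟨Bool, Unit, suffixContainsThree, deleteUnmatched, ?_⟩⟩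
  · have hne : (T.output ([0, 1] ++ [2])).head? ≠ (T.output ([0, 1] ++ [3])).head? := by
      simp only [List.cons_append, List.nil_append, hc, hd]
      decide
    exact T.length_le_aggCost_of_head?_ne hne
  · simp [lookOutput, lookAggCost, lookWord, LFT.outList, LFT.aggCost, suffixContainsThree,
      deleteUnmatched, DFA.evalFrom, ed, unitLevenshtein]
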